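/- arXiv:2208.03606 — 6 statements merged into one kernel-verified Lean document; each statement's English description precedes it below -/
import Mathlib

section
/- There exists a semimodular lattice K and a congruence α of K such that the quotient lattice K/α is not semimodular. Concretely, let K = {o, i} ∪ ({0,1} × ℚ) ordered so that o is the least element, i is the greatest element, and (a,x) ≤ (b,y) iff a = b and x ≤ y; then K is semimodular, but for the congruence α whose nonsingleton blocks are {(0,x) : x < √2}, {(0,x) : x > √2}, and {1} × ℚ, the quotient K/α is isomorphic to the pentagon N₅, which is not semimodular. -/
/-- A lattice is (upper) semimodular: `a ⋖ b` and `a ≤ c` imply `a ⊔ c ⪯ b ⊔ c`. -/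
def IsSemimodular (L : Type) [Lattice L] : Prop :=
  ∀ a b c : L, a ⋖ b → a ≤ c → (a ⊔ c = b ⊔ c ∨ (a ⊔ c) ⋖ (b ⊔ c))

/-- `M` is a quotient of the semimodular lattice `K` (via a surjective lattice
homomorphism, i.e. `M ≅ K/α` for the kernel congruence `α`), yet `M` is not semimodular. -/
def QuotientNotSemimodularWitness (K M : Type) [Lattice K] [Lattice M] : Prop :=
  (∃ f : LatticeHom K M, Function.Surjective f) ∧ IsSemimodular K ∧ ¬ IsSemimodular M

/-!
`K = HorizontalSum ℚ ℚ` has no covering pairs at all, since `ℚ` is dense without endpoints, so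
it is vacuously semimodular. Collapsing the first chain at the cut `√2` and the second chain to a
point is a lattice homomorphism (monotone maps of chains preserve `⊔` and `⊓`) onto `N₅`. There
`⊥ ⋖ c` and `⊥ ≤ a`, but `⊥ ⊔ a = a` is not covered by `c ⊔ a = ⊤` because `a < b < ⊤`.
-/

lemma isSemimodular_of_denselyOrdered (L : Type) [Lattice L] [DenselyOrdered L] :
    IsSemimodular L :=
  fun _ _ _ hab _ => (not_covBy hab).elim

/-- The horizontal sum of the bounded lattices `WithBot (WithTop α)` and `WithBot (WithTop β)`,
glued along their common bottom and top. The paper's `K` is `HorizontalSum ℚ ℚ`. -/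
inductive HorizontalSum (α β : Type*) where
  | bot
  | top
  | inl (a : α)
  | inr (b : β)

namespace HorizontalSum

variable {α β : Type*}

section LE

variable [LE α] [LE β]

instance : LE (HorizontalSum α β) where
  le
    | bot, _ => True
    | _, top => True
    | inl a, inl a' => a ≤ a'
    | inr b, inr b' => b ≤ b'
    | _, _ => False

@[simp] lemma bot_le (x : HorizontalSum α β) : bot ≤ x := trivial
@[simp] lemma le_top (x : HorizontalSum α β) : x ≤ top := by cases x <;> trivial
@[simp] lemma inl_le_inl {a a' : α} : (inl a : HorizontalSum α β) ≤ inl a' ↔ a ≤ a' := Iff.rfl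
@[simp] lemma inr_le_inr {b b' : β} : (inr b : HorizontalSum α β) ≤ inr b' ↔ b ≤ b' := Iff.rfl
@[simp] lemma not_inl_le_inr {a : α} {b : β} : ¬ (inl a : HorizontalSum α β) ≤ inr b := id
@[simp] lemma not_inr_le_inl {a : α} {b : β} : ¬ (inr b : HorizontalSum α β) ≤ inl a := id
@[simp] lemma not_top_le_inl {a : α} : ¬ (top : HorizontalSum α β) ≤ inl a := id
@[simp] lemma not_top_le_inr {b : β} : ¬ (top : HorizontalSum α β) ≤ inr b := id
@[simp] lemma not_top_le_bot : ¬ (top : HorizontalSum α β) ≤ bot := id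
@[simp] lemma not_inl_le_bot {a : α} : ¬ (inl a : HorizontalSum α β) ≤ bot := id
@[simp] lemma not_inr_le_bot {b : β} : ¬ (inr b : HorizontalSum α β) ≤ bot := id

end LE

section PartialOrder

variable [PartialOrder α] [PartialOrder β]

instance : PartialOrder (HorizontalSum α β) where
  le_refl x := by cases x <;> simp
  le_trans x y z := by
    cases x <;> cases y <;> cases z <;> simp <;> exact le_trans
  le_antisymm x y := by
    cases x <;> cases y <;> simp <;> exact fun h h' => le_antisymm h h'

@[simp] lemma inl_lt_inl {a a' : α} : (inl a : HorizontalSum α β) < inl a' ↔ a < a' := by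
  simp [lt_iff_le_not_ge]
@[simp] lemma inr_lt_inr {b b' : β} : (inr b : HorizontalSum α β) < inr b' ↔ b < b' := by
  simp [lt_iff_le_not_ge]
@[simp] lemma bot_lt_inl (a : α) : (bot : HorizontalSum α β) < inl a := by simp [lt_iff_le_not_ge]
@[simp] lemma bot_lt_inr (b : β) : (bot : HorizontalSum α β) < inr b := by simp [lt_iff_le_not_ge]
@[simp] lemma inl_lt_top (a : α) : (inl a : HorizontalSum α β) < top := by simp [lt_iff_le_not_ge]
@[simp] lemma inr_lt_top (b : β) : (inr b : HorizontalSum α β) < top := by simp [lt_iff_le_not_ge]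

instance [Nonempty α] [NoMinOrder α] [NoMaxOrder α] [DenselyOrdered α]
    [NoMinOrder β] [NoMaxOrder β] [DenselyOrdered β] : DenselyOrdered (HorizontalSum α β) where
  dense x y hxy := by
    cases x <;> cases y <;> simp [lt_iff_le_not_ge] at hxy
    case bot.top => exact ⟨inl (Classical.arbitrary α), by simp, by simp⟩
    case bot.inl a =>
      obtain ⟨a', ha'⟩ := exists_lt a
      exact ⟨inl a', by simp, by simpa⟩
    case bot.inr b =>
      obtain ⟨b', hb'⟩ := exists_lt b
      exact ⟨inr b', by simp, by simpa⟩
    case inl.top a =>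
      obtain ⟨a', ha'⟩ := exists_gt a
      exact ⟨inl a', by simpa, by simp⟩
    case inr.top b =>
      obtain ⟨b', hb'⟩ := exists_gt b
      exact ⟨inr b', by simpa, by simp⟩
    case inl.inl a a' =>
      obtain ⟨c, hac, hca'⟩ := exists_between (lt_iff_le_not_ge.mpr hxy)
      exact ⟨inl c, by simpa, by simpa⟩
    case inr.inr b b' =>
      obtain ⟨c, hbc, hcb'⟩ := exists_between (lt_iff_le_not_ge.mpr hxy)
      exact ⟨inr c, by simpa, by simpa⟩

end PartialOrder

section Max

variable [Max α] [Max β]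

instance : Max (HorizontalSum α β) where
  max
    | bot, y => y
    | x, bot => x
    | inl a, inl a' => inl (a ⊔ a')
    | inr b, inr b' => inr (b ⊔ b')
    | _, _ => top

@[simp] lemma bot_sup (x : HorizontalSum α β) : bot ⊔ x = x := rfl
@[simp] lemma sup_bot (x : HorizontalSum α β) : x ⊔ bot = x := by cases x <;> rfl
@[simp] lemma top_sup (x : HorizontalSum α β) : top ⊔ x = top := by cases x <;> rfl
@[simp] lemma sup_top (x : HorizontalSum α β) : x ⊔ top = top := by cases x <;> rfl
@[simp] lemma inl_sup_inl (a a' : α) : (inl a : HorizontalSum α β) ⊔ inl a' = inl (a ⊔ a') := rfl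
@[simp] lemma inr_sup_inr (b b' : β) : (inr b : HorizontalSum α β) ⊔ inr b' = inr (b ⊔ b') := rfl
@[simp] lemma inl_sup_inr (a : α) (b : β) : (inl a : HorizontalSum α β) ⊔ inr b = top := rfl
@[simp] lemma inr_sup_inl (a : α) (b : β) : (inr b : HorizontalSum α β) ⊔ inl a = top := rfl

end Max

section Min

variable [Min α] [Min β]

instance : Min (HorizontalSum α β) where
  min
    | top, y => y
    | x, top => x
    | inl a, inl a' => inl (a ⊓ a')
    | inr b, inr b' => inr (b ⊓ b')
    | _, _ => bot

@[simp] lemma top_inf (x : HorizontalSum α β) : top ⊓ x = x := rfl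
@[simp] lemma inf_top (x : HorizontalSum α β) : x ⊓ top = x := by cases x <;> rfl
@[simp] lemma bot_inf (x : HorizontalSum α β) : bot ⊓ x = bot := by cases x <;> rfl
@[simp] lemma inf_bot (x : HorizontalSum α β) : x ⊓ bot = bot := by cases x <;> rfl
@[simp] lemma inl_inf_inl (a a' : α) : (inl a : HorizontalSum α β) ⊓ inl a' = inl (a ⊓ a') := rfl
@[simp] lemma inr_inf_inr (b b' : β) : (inr b : HorizontalSum α β) ⊓ inr b' = inr (b ⊓ b') := rfl
@[simp] lemma inl_inf_inr (a : α) (b : β) : (inl a : HorizontalSum α β) ⊓ inr b = bot := rfl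
@[simp] lemma inr_inf_inl (a : α) (b : β) : (inr b : HorizontalSum α β) ⊓ inl a = bot := rfl

end Min

section Lattice

variable [Lattice α] [Lattice β]

instance : Lattice (HorizontalSum α β) where
  sup := max
  inf := min
  le_sup_left x y := by cases x <;> cases y <;> simp
  le_sup_right x y := by cases x <;> cases y <;> simp
  sup_le x y z := by cases x <;> cases y <;> cases z <;> simp +contextual
  inf_le_left x y := by cases x <;> cases y <;> simp
  inf_le_right x y := by cases x <;> cases y <;> simp
  le_inf x y z := by cases x <;> cases y <;> cases z <;> simp +contextual

def map {α' β' : Type*} [Lattice α'] [Lattice β'] (f : LatticeHom α α') (g : LatticeHom β β') :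
    LatticeHom (HorizontalSum α β) (HorizontalSum α' β') where
  toFun
    | bot => bot
    | top => top
    | inl a => inl (f a)
    | inr b => inr (g b)
  map_sup' x y := by cases x <;> cases y <;> simp
  map_inf' x y := by cases x <;> cases y <;> simp

lemma map_surjective {α' β' : Type*} [Lattice α'] [Lattice β'] {f : LatticeHom α α'}
    {g : LatticeHom β β'} (hf : Function.Surjective f) (hg : Function.Surjective g) :
    Function.Surjective (map f g) := by
  rintro (_ | _ | a | b)
  · exact ⟨bot, rfl⟩
  · exact ⟨top, rfl⟩
  · obtain ⟨a, rfl⟩ := hf a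
    exact ⟨inl a, rfl⟩
  · obtain ⟨b, rfl⟩ := hg b
    exact ⟨inr b, rfl⟩

end Lattice

end HorizontalSum

/-- `N₅ = {⊥, a, b, c, ⊤}` with `a = inl false`, `b = inl true` and `c = inr ()`. -/
abbrev Pentagon : Type := HorizontalSum Bool Unit

open HorizontalSum in
lemma not_isSemimodular_pentagon : ¬ IsSemimodular Pentagon := by
  have hcov : (bot : Pentagon) ⋖ inr () := by
    refine ⟨bot_lt_inr (), fun c hc hc' => ?_⟩
    cases c <;> simp_all [lt_iff_le_not_ge]
  have hne : (inl false : Pentagon) ≠ top := nofun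
  have hncov : ¬ (inl false : Pentagon) ⋖ top :=
    fun h => h.2 (c := inl true) (by simp) (by simp)
  intro h
  simpa [hne, hncov] using h bot (inr ()) (inl false) hcov (bot_le _)

/-- The fibres `{x < √2}` and `{x > √2}` are the blocks of the paper's congruence on `{0} × ℚ`. -/
noncomputable def sqrtTwoCut : ℚ →o Bool where
  toFun x := decide (√2 < x)
  monotone' _ _ hxy h := by
    simp only [decide_eq_true_eq] at h ⊢
    exact h.trans_le (by exact_mod_cast hxy)

lemma sqrtTwoCut_apply (x : ℚ) : sqrtTwoCut x = decide (√2 < x) := rfl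

lemma sqrtTwoCut_surjective : Function.Surjective sqrtTwoCut := by
  have h0 : sqrtTwoCut 0 = false := by norm_num [sqrtTwoCut_apply]
  have h2 : sqrtTwoCut 2 = true := by norm_num [sqrtTwoCut_apply]
  rintro (_ | _)
  exacts [⟨0, h0⟩, ⟨2, h2⟩]

/-- There exists a semimodular lattice `K` and a congruence `α` of `K` (encoded as the
kernel of a surjective lattice homomorphism) such that the quotient `K/α` is not
semimodular. -/
theorem exists_semimodular_with_nonsemimodular_quotient :
    ∃ (K M : Type) (iK : Lattice K) (iM : Lattice M),
      @QuotientNotSemimodularWitness K M iK iM := by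
  let toPentagon : LatticeHom (HorizontalSum ℚ ℚ) Pentagon :=
    HorizontalSum.map (OrderHomClass.toLatticeHom ℚ Bool sqrtTwoCut)
      (OrderHomClass.toLatticeHom ℚ Unit (OrderHom.const ℚ ()))
  have h_surj : Function.Surjective toPentagon :=
    HorizontalSum.map_surjective sqrtTwoCut_surjective fun _ => ⟨0, rfl⟩
  exact ⟨_, _, _, _, ⟨toPentagon, h_surj⟩, isSemimodular_of_denselyOrdered _,
    not_isSemimodular_pentagon⟩
end

section
/- If L is a finite slim lattice (i.e., the poset of nonzero join-irreducible elements of L is the union of two chains) and α is a congruence of L, then the quotient L/α is also slim: the poset of nonzero join-irreducible elements of L/α is the union of two chains. -/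
/-- A finite lattice is slim if the set of its nonzero join-irreducible elements is the
union of two chains. -/
def IsSlim (L : Type*) [Lattice L] : Prop :=
  ∃ C C' : Set L, IsChain (· ≤ ·) C ∧ IsChain (· ≤ ·) C' ∧
    {a : L | SupIrred a} ⊆ C ∪ C'

/-!
Every join-irreducible element `b` of the quotient lifts to a join-irreducible element of `L`,
namely the least element of its congruence class. Hence the join-irreducibles of the quotient
lie in the images of the two chains covering `Ji(L)`, and images of chains are chains.
-/

theorem InfHom.exists_isLeast_fiber {L M : Type*} [SemilatticeInf L] [Finite L]
    [SemilatticeInf M] (f : InfHom L M) {b : M} (hb : b ∈ Set.range f) :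
    ∃ a, IsLeast (f ⁻¹' {b}) a := by
  obtain ⟨a, ha⟩ := (Set.toFinite (f ⁻¹' {b})).exists_minimal hb
  refine ⟨a, ha.prop, fun x hx => ?_⟩
  have hxa : f (x ⊓ a) = b := by
    rw [map_inf, Set.mem_preimage.mp hx, Set.mem_preimage.mp ha.prop, inf_idem]
  exact ha.eq_of_le hxa inf_le_right ▸ inf_le_left

theorem LatticeHom.supIrred_of_isLeast_fiber {L M : Type*} [Lattice L] [Lattice M]
    (f : LatticeHom L M) (hf : Function.Surjective f) {a : L} {b : M}
    (ha : IsLeast (f ⁻¹' {b}) a) (hb : SupIrred b) : SupIrred a := by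
  have hfa : f a = b := ha.1
  refine ⟨fun hmin => hb.1 fun c _ => ?_, fun u v huv => ?_⟩
  · -- a minimal `a` is the bottom of `L`, so `b = f a` is the bottom of `M`
    obtain ⟨y, rfl⟩ := hf c
    have hya : y ⊓ a = a := le_antisymm inf_le_right (hmin inf_le_right)
    calc b = f (y ⊓ a) := by rw [hya, hfa]
      _ = f y ⊓ b := by rw [map_inf, hfa]
      _ ≤ f y := inf_le_left
  · have hfuv : f u ⊔ f v = b := by rw [← map_sup, huv, hfa]
    rcases hb.2 hfuv with hu | hv
    · exact Or.inl (le_antisymm (huv ▸ le_sup_left) (ha.2 hu))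
    · exact Or.inr (le_antisymm (huv ▸ le_sup_right) (ha.2 hv))

theorem LatticeHom.exists_supIrred_apply_eq {L M : Type*} [Lattice L] [Finite L] [Lattice M]
    (f : LatticeHom L M) (hf : Function.Surjective f) {b : M} (hb : SupIrred b) :
    ∃ a, SupIrred a ∧ f a = b := by
  obtain ⟨a, ha⟩ := InfHom.exists_isLeast_fiber (f : InfHom L M) (hf b)
  exact ⟨a, f.supIrred_of_isLeast_fiber hf ha hb, ha.1⟩

/-- The congruence `α` is encoded as the kernel of the surjective lattice homomorphism `f`,
and the quotient `L/α` as `M`. -/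
theorem quotient_slim_of_slim
    {L M : Type*} [Lattice L] [Fintype L] [Lattice M]
    (hL : IsSlim L)
    (f : LatticeHom L M) (hf : Function.Surjective f) :
    IsSlim M := by
  obtain ⟨C, C', hC, hC', hJi⟩ := hL
  have hmono : ∀ x y, x ≤ y → f x ≤ f y := fun _ _ h => OrderHomClass.mono f h
  refine ⟨f '' C, f '' C', hC.image_of_map_rel _ _ f hmono, hC'.image_of_map_rel _ _ f hmono, ?_⟩
  intro b hb
  obtain ⟨a, ha, rfl⟩ := f.exists_supIrred_apply_eq hf hb
  rw [← Set.image_union]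
  exact Set.mem_image_of_mem f (hJi ha)
end

section
/- Let D be a finite distributive lattice, u ∈ D, X = ↑u the principal filter of u, and Y = {p ∈ Ji(D) : p ≰ u}. Then the map μ : Y → Ji(X) defined by μ(p) = u ∨ p is an order isomorphism between the poset Y (with the order inherited from D) and the poset of nonzero join-irreducible elements of the lattice X = [u, 1]. -/
/-!
In a distributive lattice join-irreducibles are join-prime. Hence for `p ≰ u` the inequality
`p ≤ u ⊔ q` forces `p ≤ q`, which makes `p ↦ u ⊔ p` an order embedding and `u ⊔ p` join-prime in
`↑u`. Conversely `x ↦ u ⊔ x` is a join-homomorphism from `D` onto `↑u` sending `⊥` to `u`; a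
join-irreducible `z` of `↑u` is the image of the join of the join-irreducibles of `D` below it,
so it is already the image of one of them.
-/

section SemilatticeSup

variable {α : Type*} [SemilatticeSup α] {u p q : α}

theorem SupPrime.sup_le_sup_left_iff (hp : SupPrime p) (hpu : ¬ p ≤ u) :
    u ⊔ p ≤ u ⊔ q ↔ p ≤ q :=
  ⟨fun h => (hp.le_sup.1 (le_sup_right.trans h)).resolve_left hpu,
    fun h => sup_le_sup_left h u⟩

theorem SupPrime.supPrime_sup_left_Ici (hp : SupPrime p) (hpu : ¬ p ≤ u) :
    SupPrime (⟨u ⊔ p, le_sup_left⟩ : Set.Ici u) := by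
  refine ⟨fun hmin => hpu (le_sup_right.trans (hmin (bot_le : (⊥ : Set.Ici u) ≤ _))), ?_⟩
  rintro ⟨a, ha⟩ ⟨b, hb⟩ hle
  have : p ≤ a ∨ p ≤ b := hp.le_sup.1 (le_sup_right.trans hle)
  exact this.imp (sup_le ha) (sup_le hb)

def supLeftIci [OrderBot α] (u : α) : SupBotHom α (Set.Ici u) where
  toFun x := ⟨u ⊔ x, le_sup_left⟩
  map_sup' x y := Subtype.ext (sup_sup_distrib_left u x y)
  map_bot' := Subtype.ext (sup_bot_eq u)

end SemilatticeSup

theorem SupIrred.exists_supIrred_map_eq {α β F : Type*} [SemilatticeSup α] [OrderBot α]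
    [WellFoundedLT α] [SemilatticeSup β] [OrderBot β] [FunLike F α β] [SupBotHomClass F α β]
    (f : F) {a : α} (ha : SupIrred (f a)) : ∃ p, SupIrred p ∧ f p = f a := by
  obtain ⟨s, hs, hirr⟩ := exists_supIrred_decomposition a
  obtain ⟨p, hps, hp⟩ := ha.finset_sup_eq (s := s) (f := f) (by rw [← hs, map_finset_sup]; rfl)
  exact ⟨p, hirr hps, hp⟩

theorem exists_supIrred_not_le_sup_eq {α : Type*} [SemilatticeSup α] [OrderBot α]
    [WellFoundedLT α] {u : α} {z : Set.Ici u} (hz : SupIrred z) :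
    ∃ p, SupIrred p ∧ ¬ p ≤ u ∧ u ⊔ p = z := by
  have hz_fixed : supLeftIci u z = z := Subtype.ext (sup_eq_right.2 z.2)
  obtain ⟨p, hp, hfp⟩ := (hz_fixed.symm ▸ hz).exists_supIrred_map_eq (supLeftIci u)
  have hpz : supLeftIci u p = z := hfp.trans hz_fixed
  refine ⟨p, hp, fun hpu => hz.ne_bot ?_, congrArg Subtype.val hpz⟩
  calc z = supLeftIci u p := hpz.symm
    _ = ⊥ := Subtype.ext (sup_eq_left.2 hpu)

/-- Let `D` be a finite distributive lattice, `u ∈ D`, `X = ↑u` its principal filter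
(a lattice in its own right, with least element `u`), and
`Y = {p ∈ Ji(D) : p ≰ u}`.  Then `p ↦ u ⊔ p` is an order isomorphism from `Y` (with the
order inherited from `D`) onto the poset `Ji(X)` of nonzero join-irreducible elements of
`X`. -/
theorem filter_supIrred_orderIso
    {D : Type*} [DistribLattice D] [Fintype D] (u : D) :
    ∃ e : {p : D // SupIrred p ∧ ¬ p ≤ u} ≃o {z : Set.Ici u // SupIrred z},
      ∀ p : {p : D // SupIrred p ∧ ¬ p ≤ u}, ((e p : Set.Ici u) : D) = u ⊔ p.1 := by
  let f : {p : D // SupIrred p ∧ ¬ p ≤ u} → {z : Set.Ici u // SupIrred z} :=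
    fun p => ⟨_, (p.2.1.supPrime.supPrime_sup_left_Ici p.2.2).supIrred⟩
  have hf : ∀ p q, f p ≤ f q ↔ p ≤ q := fun p q => p.2.1.supPrime.sup_le_sup_left_iff p.2.2
  have hsurj : Function.Surjective f := by
    have : Nonempty D := ⟨u⟩
    let := Fintype.toOrderBot D
    rintro ⟨z, hz⟩
    obtain ⟨p, hp, hpu, hpz⟩ := exists_supIrred_not_le_sup_eq hz
    exact ⟨⟨p, hp, hpu⟩, Subtype.ext (Subtype.ext hpz)⟩
  exact ⟨RelIso.ofSurjective (OrderEmbedding.ofMapLEIff f hf) hsurj, fun _ => rfl⟩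
end

section
/- Let P be a finite poset, j ∈ P, and U_j the set of covers of j in P. Pick i ∉ P and define a relation ≺ on P ∪ {i} by: x ≺ y iff (x, y ∈ P and x ≺_P y) or (x = i and y ∈ U_j). Then ≺ is the covering relation of a partial order on P ∪ {i} in which i is a minimal element whose set of covers equals U_j, and the restriction of this order to P coincides with the original order on P. -/
/-- "Adding a brother" of `j` to the poset `P`: on `Option P`, where `none` encodes the
new element `i`, we let `x ≤ y` iff both are old elements with `x ≤_P y`, or `x = i` and
`y` lies above some cover of `j`, or `x = y = i`. -/
def broLe {P : Type*} [PartialOrder P] (j : P) : Option P → Option P → Prop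
  | some a, some b => a ≤ b
  | none, some b => ∃ u : P, j ⋖ u ∧ u ≤ b
  | none, none => True
  | some _, none => False

namespace broLe

variable {P : Type*} [PartialOrder P] (j : P)

def CovBy (x y : Option P) : Prop :=
  (broLe j x y ∧ x ≠ y) ∧
    ∀ z : Option P, broLe j x z → x ≠ z → broLe j z y → z ≠ y → False

variable {j}

theorem some_some_iff {a b : P} : broLe j (some a) (some b) ↔ a ≤ b := Iff.rfl

theorem not_some_none (a : P) : ¬ broLe j (some a) none := id

theorem eq_none_of_le_none : ∀ {x : Option P}, broLe j x none → x = none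
  | none, _ => rfl

theorem refl : Reflexive (broLe j)
  | none => trivial
  | some a => le_refl a

theorem antisymm : AntiSymmetric (broLe j)
  | none, none, _, _ => rfl
  | some _, some _, hab, hba => congrArg some (le_antisymm hab hba)

theorem trans : Transitive (broLe j)
  | none, none, _, _, hyz => hyz
  | none, some _, some _, ⟨u, hu, hub⟩, hbc => ⟨u, hu, hub.trans hbc⟩
  | some _, some _, some _, hab, hbc => le_trans hab hbc

theorem some_some_and_ne_iff {a b : P} :
    (broLe j (some a) (some b) ∧ some a ≠ some b) ↔ a < b := by
  rw [some_some_iff, Ne, Option.some_inj, lt_iff_le_and_ne]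

theorem covBy_some_some {a b : P} : CovBy j (some a) (some b) ↔ a ⋖ b := by
  refine ⟨fun ⟨hab, hmin⟩ => ⟨some_some_and_ne_iff.1 hab, fun c hac hcb => ?_⟩,
    fun hab => ⟨some_some_and_ne_iff.2 hab.lt, fun z haz haz' hzb hzb' => ?_⟩⟩
  · exact hmin (some c) hac.le (by simp [hac.ne]) hcb.le (by simp [hcb.ne])
  · cases z with
    | none => exact not_some_none a haz
    | some c =>
      exact hab.2 (some_some_and_ne_iff.1 ⟨haz, haz'⟩) (some_some_and_ne_iff.1 ⟨hzb, hzb'⟩)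

/-- No cover of `j` lies strictly below another one, so an element of `P` strictly between
the new element and a cover `b` of `j` would sit above a cover of `j` strictly below `b`. -/
theorem covBy_none_some {b : P} : CovBy j none (some b) ↔ j ⋖ b := by
  constructor
  · rintro ⟨⟨⟨u, hu, hub⟩, -⟩, hmin⟩
    obtain rfl : u = b := by
      by_contra hne
      exact hmin (some u) ⟨u, hu, le_rfl⟩ (by simp) hub (by simp [hne])
    exact hu
  · refine fun hb => ⟨⟨⟨b, hb, le_rfl⟩, by simp⟩, fun z hz hz' hzb hzb' => ?_⟩
    cases z with
    | none => exact hz' rfl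
    | some c =>
      obtain ⟨v, hv, hvc⟩ := hz
      exact hb.2 hv.lt (hvc.trans_lt (some_some_and_ne_iff.1 ⟨hzb, hzb'⟩))

theorem not_covBy_none (x : Option P) : ¬ CovBy j x none :=
  fun ⟨⟨hle, hne⟩, _⟩ => hne (eq_none_of_le_none hle)

theorem covBy_iff {x y : Option P} :
    CovBy j x y ↔
      (∃ a b : P, x = some a ∧ y = some b ∧ a ⋖ b) ∨
        (x = none ∧ ∃ u : P, j ⋖ u ∧ y = some u) := by
  cases y with
  | none => simpa using not_covBy_none x
  | some b =>
    cases x with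
    | none => simpa using covBy_none_some
    | some a => simpa using covBy_some_some

end broLe

theorem broLe_partialOrder_and_covers_general
    {P : Type*} [PartialOrder P] (j : P) :
    -- `broLe j` is a partial order
    (Reflexive (broLe j) ∧ AntiSymmetric (broLe j) ∧ Transitive (broLe j)) ∧
    -- its covering relation is exactly the prescribed one
    (∀ x y : Option P,
      ((broLe j x y ∧ x ≠ y) ∧
        ∀ z : Option P, broLe j x z → x ≠ z → broLe j z y → z ≠ y → False) ↔
      ((∃ a b : P, x = some a ∧ y = some b ∧ a ⋖ b) ∨
        (x = none ∧ ∃ u : P, j ⋖ u ∧ y = some u))) ∧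
    -- `i` (= `none`) is a minimal element
    (∀ x : Option P, broLe j x none → x = none) ∧
    -- the restriction of the new order to `P` is the original order
    (∀ a b : P, broLe j (some a) (some b) ↔ a ≤ b) :=
  ⟨⟨broLe.refl, broLe.antisymm, broLe.trans⟩, fun _ _ => broLe.covBy_iff,
    fun _ => broLe.eq_none_of_le_none, fun _ _ => broLe.some_some_iff⟩

/-- For a finite poset `P`, `j ∈ P` and a new element `i ∉ P` (encoded as `none` in
`Option P`), the relation `x ≺ y` iff (`x, y ∈ P` and `x ≺_P y`) or (`x = i` and
`y` is a cover of `j`) is the covering relation of a partial order on `P ∪ {i}` in which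
`i` is a minimal element whose set of covers equals the set `U_j` of covers of `j`, and
whose restriction to `P` coincides with the original order. -/
theorem broLe_partialOrder_and_covers
    {P : Type*} [PartialOrder P] [Fintype P] (j : P) :
    -- `broLe j` is a partial order
    (Reflexive (broLe j) ∧ AntiSymmetric (broLe j) ∧ Transitive (broLe j)) ∧
    -- its covering relation is exactly the prescribed one
    (∀ x y : Option P,
      ((broLe j x y ∧ x ≠ y) ∧
        ∀ z : Option P, broLe j x z → x ≠ z → broLe j z y → z ≠ y → False) ↔
      ((∃ a b : P, x = some a ∧ y = some b ∧ a ⋖ b) ∨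
        (x = none ∧ ∃ u : P, j ⋖ u ∧ y = some u))) ∧
    -- `i` (= `none`) is a minimal element
    (∀ x : Option P, broLe j x none → x = none) ∧
    -- the restriction of the new order to `P` is the original order
    (∀ a b : P, broLe j (some a) (some b) ↔ a ≤ b) :=
  broLe_partialOrder_and_covers_general j
end

section
/- Let L be a finite lattice, α a congruence of L, x/α ⋖ y/α and x/α < z/α in L/α, where x is the largest element of its α-block. Then there exist x ≤ y' with x ⋖ y' in L and y'/α = y/α. (Every covering in the quotient at a block-maximal element is witnessed by a covering in L.) -/
section

variable {L M F : Type*} [SemilatticeSup L] [SemilatticeSup M] [FunLike F L M] [SupHomClass F L M]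

theorem map_eq_of_lt_of_le_sup (f : F) {x y y' : L} (hxmax : ∀ w : L, f w = f x → w ≤ x)
    (hcov : f x ⋖ f y) (hxy' : x < y') (hle : y' ≤ x ⊔ y) : f y' = f y := by
  have hlow : f x < f y' :=
    (OrderHomClass.mono f hxy'.le).lt_of_ne fun h => hxy'.not_ge (hxmax y' h.symm)
  have hhigh : f y' ≤ f y := by
    simpa only [map_sup, sup_eq_right.2 hcov.le] using OrderHomClass.mono f hle
  exact hhigh.eq_of_not_lt (hcov.2 hlow)

end

theorem cover_in_quotient_witnessed_general
    {L M : Type*} [Lattice L] [Fintype L] [Lattice M]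
    (f : LatticeHom L M)
    {x y : L}
    (hxmax : ∀ w : L, f w = f x → w ≤ x)
    (hcov : f x ⋖ f y) :
    ∃ y' : L, x ⋖ y' ∧ f y' = f y := by
  have hxy : x < x ⊔ y := left_lt_sup.2 fun h => hcov.lt.not_ge (OrderHomClass.mono f h)
  obtain ⟨y', hxy', hle⟩ := hxy.exists_covby_le
  exact ⟨y', hxy', map_eq_of_lt_of_le_sup f hxmax hcov hxy'.lt hle⟩

/-- Let `L` be a finite lattice and `α` a congruence of `L` (encoded as the kernel of the
surjective lattice homomorphism `f`).  Suppose `x/α ⋖ y/α` and `x/α < z/α` in the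
quotient, where `x` is the largest element of its `α`-block.  Then the covering in the
quotient is witnessed by a covering in `L`: there is `y'` with `x ⋖ y'` and
`y'/α = y/α`. -/
theorem cover_in_quotient_witnessed
    {L M : Type*} [Lattice L] [Fintype L] [Lattice M]
    (f : LatticeHom L M) (hf : Function.Surjective f)
    {x y z : L}
    (hxmax : ∀ w : L, f w = f x → w ≤ x)
    (hcov : f x ⋖ f y) (hlt : f x < f z) :
    ∃ y' : L, x ⋖ y' ∧ f y' = f y :=
  cover_in_quotient_witnessed_general f hxmax hcov
end

section
/- Let P be a finite poset and let i and i' be two elements of a finite poset P' extending P (P' = P ∪ {i}) such that i is minimal in P' and the set of covers of i in P' equals the set of covers of some j ∈ P in P. Then the order filters of P' are exactly the order filters F of P, together with the sets F ∪ {i} for those order filters F of P containing all covers of j. -/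
namespace Set

variable {α : Type*} {s : Set (Option α)}

theorem image_some_preimage_some_of_none_notMem (h : none ∉ s) : some '' (some ⁻¹' s) = s :=
  image_preimage_eq_of_subset fun x hx => by
    cases x with
    | none => exact absurd hx h
    | some a => exact mem_range_self a

theorem insert_none_image_some_preimage_some_of_none_mem (h : none ∈ s) :
    insert none (some '' (some ⁻¹' s)) = s := by
  ext (_ | a) <;> simp [h]

end Set

theorem broLe_closed_iff {P : Type*} [PartialOrder P] (j : P) (F : Set (Option P)) :
    (∀ x ∈ F, ∀ y, broLe j x y → y ∈ F) ↔
      IsUpperSet (some ⁻¹' F) ∧ (none ∈ F → ∀ u, j ⋖ u → some u ∈ F) := by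
  refine ⟨fun h => ⟨fun a b hab ha => h (some a) ha (some b) hab,
    fun hn u hu => h none hn (some u) ⟨u, hu, le_rfl⟩⟩, ?_⟩
  rintro ⟨hup, hcov⟩ (_ | a) hx (_ | b) hxy
  · exact hx
  · obtain ⟨u, hu, hub⟩ := hxy
    exact hup hub (hcov hx u hu)
  · exact hxy.elim
  · exact hup hxy hx

theorem orderFilters_of_brother_extension_general
    {P : Type*} [PartialOrder P] (j : P) (F : Set (Option P)) :
    (∀ x ∈ F, ∀ y : Option P, broLe j x y → y ∈ F) ↔
      ((∃ G : Set P, (∀ a ∈ G, ∀ b : P, a ≤ b → b ∈ G) ∧ F = some '' G) ∨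
       (∃ G : Set P, (∀ a ∈ G, ∀ b : P, a ≤ b → b ∈ G) ∧
          (∀ u : P, j ⋖ u → u ∈ G) ∧ F = insert none (some '' G))) := by
  rw [broLe_closed_iff]
  constructor
  · rintro ⟨hup, hcov⟩
    by_cases hn : none ∈ F
    · exact .inr ⟨_, fun a ha b hab => hup hab ha, hcov hn,
        (Set.insert_none_image_some_preimage_some_of_none_mem hn).symm⟩
    · exact .inl ⟨_, fun a ha b hab => hup hab ha,
        (Set.image_some_preimage_some_of_none_notMem hn).symm⟩
  · rintro (⟨G, hG, rfl⟩ | ⟨G, hG, hcov, rfl⟩)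
    · rw [Option.some_injective _ |>.preimage_image]
      exact ⟨fun a b hab ha => hG a ha b hab, by simp⟩
    · have htrace : some ⁻¹' insert none (some '' G) = G := by ext; simp
      rw [htrace]
      exact ⟨fun a b hab ha => hG a ha b hab, fun _ u hu => .inr ⟨u, hcov u hu, rfl⟩⟩

/-- Let `P' = P +_j^bro i` be the finite poset obtained from `P` by adding a new minimal
element `i` (encoded as `none`) whose covers are exactly the covers of `j`.  The order
filters (up-sets) of `P'` are exactly the order filters `F` of `P`, together with the
sets `F ∪ {i}` for those order filters `F` of `P` containing all covers of `j`. -/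
theorem orderFilters_of_brother_extension
    {P : Type*} [PartialOrder P] [Fintype P] (j : P) (F : Set (Option P)) :
    (∀ x ∈ F, ∀ y : Option P, broLe j x y → y ∈ F) ↔
      ((∃ G : Set P, (∀ a ∈ G, ∀ b : P, a ≤ b → b ∈ G) ∧ F = some '' G) ∨
       (∃ G : Set P, (∀ a ∈ G, ∀ b : P, a ≤ b → b ∈ G) ∧
          (∀ u : P, j ⋖ u → u ∈ G) ∧ F = insert none (some '' G))) :=
  orderFilters_of_brother_extension_general j F
end
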